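/- arXiv:2502.01917 — 3 statements merged into one kernel-verified Lean document; each statement's English description precedes it below -/
import Mathlib

section
/- Let [a; b] be a 2×n semi-standard tableau with a ≠ b, and set k' = min{j : a_j ≠ b_j} (so a_{k'} < b_{k'}). If there exists j > k' with a_j < b_j, then [a; b] is not standard: the tableau [p; q] obtained by setting p_ℓ = a_ℓ for ℓ ≠ j, p_j = b_j, and q_ℓ = b_ℓ for ℓ ≠ j, q_j = a_j satisfies a >_σ p ≥_σ q, supp([p;q]) = supp([a;b]), and [p;q] <_σ [a;b] while [p;q] is semi-standard. -/
open Finset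

/-- `a >_σ b`: the first index where `a` and `b` differ has `a k < b k`. -/
def sigmaGT {n : ℕ} (a b : Fin n → ℕ+) : Prop :=
  ∃ k : Fin n, (∀ i : Fin n, i < k → a i = b i) ∧ a k < b k

/-- `a ≥_σ b`. -/
def sigmaGE {n : ℕ} (a b : Fin n → ℕ+) : Prop :=
  a = b ∨ sigmaGT a b

/-- A `p × n` tableau (rows in `ℤ₊ⁿ`) is semi-standard if its rows weakly decrease under `σ`. -/
def SemiStandard {p n : ℕ} (A : Fin p → Fin n → ℕ+) : Prop :=
  ∀ i j : Fin p, i ≤ j → sigmaGE (A i) (A j)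

/-- `suppEq A B`: every column of `A` equals the corresponding column of `B` as a multiset. -/
def suppEq {p n : ℕ} (A B : Fin p → Fin n → ℕ+) : Prop :=
  ∀ j : Fin n, Multiset.map (fun i => A i j) Finset.univ.val
    = Multiset.map (fun i => B i j) Finset.univ.val

/-- Row-wise lexicographic comparison of tableaux under `σ`: `A >_σ B`. -/
def tabGT {p n : ℕ} (A B : Fin p → Fin n → ℕ+) : Prop :=
  ∃ k : Fin p, (∀ i : Fin p, i < k → A i = B i) ∧ sigmaGT (A k) (B k)

/-- A semi-standard tableau is standard if it is `σ`-minimal among all semi-standard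
tableaux with the same column supports. -/
def IsStandard {p n : ℕ} (A : Fin p → Fin n → ℕ+) : Prop :=
  SemiStandard A ∧ ∀ B : Fin p → Fin n → ℕ+,
    SemiStandard B → suppEq B A → B ≠ A → tabGT B A

/-- An `n`-dimensional Ferrers diagram: a nonempty finite down-closed subset of `ℤ₊ⁿ`. -/
def IsFerrers {n : ℕ} (D : Set (Fin n → ℕ+)) : Prop :=
  D.Nonempty ∧ D.Finite ∧ ∀ b ∈ D, ∀ a : Fin n → ℕ+, (∀ i, a i ≤ b i) → a ∈ D

/-- `D` is standardizable. -/
def Standardizable {n : ℕ} (D : Set (Fin n → ℕ+)) : Prop :=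
  ∀ a ∈ D, ∀ b ∈ D, a ≠ b → ∀ k : Fin n,
    (∀ i : Fin n, i < k → a i = b i) → a k < b k →
    (fun i => if i ≤ k then a i else max (a i) (b i)) ∈ D

/-- degree of the variable `x_{i,j}` in the monomial `∏_ℓ x_{a ℓ}`. -/
def degOf {w n : ℕ} (a : Fin w → Fin n → ℕ+) (i : Fin n) (j : ℕ) : ℕ :=
  (Finset.univ.filter fun ℓ => ((a ℓ i : ℕ) = j)).card

/-!
Swapping the two entries of column `j` preserves the column supports. Because `j` lies after
the first column `k'` where the rows differ, the new rows still differ first at `k'`, so the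
swapped tableau is semi-standard; its first row exceeds `a` exactly at `j`, so it is
`σ`-smaller than `[a; b]`, which contradicts `σ`-minimality. Both `>_σ` orders are `Pi.Lex`
orders, so their asymmetry comes from `Pi.Lex`.
-/

section Lex

variable {p n : ℕ}

theorem tabGT_iff_toLex_lt {A B : Fin p → Fin n → ℕ+} :
    tabGT A B ↔ toLex (fun i => toLex (A i)) < toLex (fun i => toLex (B i)) :=
  Iff.rfl

theorem tabGT_irrefl (A : Fin p → Fin n → ℕ+) : ¬ tabGT A A := by
  rw [tabGT_iff_toLex_lt]
  exact lt_irrefl _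

theorem tabGT_asymm {A B : Fin p → Fin n → ℕ+} (h : tabGT A B) : ¬ tabGT B A := by
  rw [tabGT_iff_toLex_lt] at h ⊢
  exact lt_asymm h

end Lex

theorem sigmaGT.lt_of_forall_lt_eq_of_ne {n : ℕ} {a b : Fin n → ℕ+} (hab : sigmaGT a b)
    {k : Fin n} (heq : ∀ i, i < k → a i = b i) (hne : a k ≠ b k) : a k < b k := by
  obtain ⟨m, hm, hlt⟩ := hab
  rcases lt_trichotomy m k with h | rfl | h
  · exact absurd (heq m h) hlt.ne
  · exact hlt
  · exact absurd (hm k h) hne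

theorem sigmaGT_update_update {n : ℕ} {a b : Fin n → ℕ+} {k j : Fin n}
    (heq : ∀ i, i < k → a i = b i) (hlt : a k < b k) (hkj : k < j) (x y : ℕ+) :
    sigmaGT (Function.update a j x) (Function.update b j y) := by
  refine ⟨k, fun i hi => ?_, ?_⟩
  · rw [Function.update_of_ne (hi.trans hkj).ne, Function.update_of_ne (hi.trans hkj).ne]
    exact heq i hi
  · rwa [Function.update_of_ne hkj.ne, Function.update_of_ne hkj.ne]

theorem semiStandard_pair_iff {n : ℕ} {a b : Fin n → ℕ+} :
    SemiStandard ![a, b] ↔ sigmaGE a b := by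
  refine ⟨fun h => h 0 1 zero_le_one, fun h i j hij => ?_⟩
  fin_cases i <;> fin_cases j
  · exact Or.inl rfl
  · exact h
  · exact absurd hij (by decide)
  · exact Or.inl rfl

theorem suppEq_pair_swap {n : ℕ} (a b : Fin n → ℕ+) (j : Fin n) :
    suppEq ![Function.update a j (b j), Function.update b j (a j)] ![a, b] := by
  intro i
  change ({_, _} : Multiset ℕ+) = {_, _}
  rcases eq_or_ne i j with rfl | hij
  · simpa using Multiset.pair_comm _ _
  · simp [Function.update_of_ne hij]

theorem tabGT_pair_of_sigmaGT {n : ℕ} {a b c d : Fin n → ℕ+} (h : sigmaGT a c) :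
    tabGT ![a, b] ![c, d] :=
  ⟨0, fun i hi => absurd hi (Fin.not_lt_zero i), h⟩

theorem not_isStandard_of_tabGT {p n : ℕ} {A B : Fin p → Fin n → ℕ+} (hB : SemiStandard B)
    (hsupp : suppEq B A) (hAB : tabGT A B) : ¬ IsStandard A := by
  rintro ⟨-, hmin⟩
  have hBA : B ≠ A := by
    rintro rfl
    exact tabGT_irrefl B hAB
  exact tabGT_asymm hAB (hmin B hB hsupp hBA)

theorem stmt4_general {n : ℕ} (a b : Fin n → ℕ+) (hss : SemiStandard ![a, b])
    (k' : Fin n) (hk' : a k' ≠ b k') (hmin : ∀ i : Fin n, i < k' → a i = b i)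
    (j : Fin n) (hj : k' < j) (hjlt : a j < b j) :
    sigmaGT a (Function.update a j (b j)) ∧
    sigmaGE (Function.update a j (b j)) (Function.update b j (a j)) ∧
    suppEq ![Function.update a j (b j), Function.update b j (a j)] ![a, b] ∧
    SemiStandard ![Function.update a j (b j), Function.update b j (a j)] ∧
    tabGT ![a, b] ![Function.update a j (b j), Function.update b j (a j)] ∧
    ¬ IsStandard ![a, b] := by
  have hab : sigmaGT a b :=
    (semiStandard_pair_iff.1 hss).resolve_left fun h => hk' (congrFun h k')
  have hk'lt : a k' < b k' := hab.lt_of_forall_lt_eq_of_ne hmin hk'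
  have hap : sigmaGT a (Function.update a j (b j)) :=
    Pi.lt_toLex_update_self_iff.2 hjlt
  have hpq : sigmaGE (Function.update a j (b j)) (Function.update b j (a j)) :=
    Or.inr (sigmaGT_update_update hmin hk'lt hj _ _)
  have hpqss := semiStandard_pair_iff.2 hpq
  have hsupp := suppEq_pair_swap a b j
  have habpq := tabGT_pair_of_sigmaGT (b := b) (d := Function.update b j (a j)) hap
  exact ⟨hap, hpq, hsupp, hpqss, habpq, not_isStandard_of_tabGT hpqss hsupp habpq⟩

theorem stmt4 {n : ℕ} (a b : Fin n → ℕ+) (hss : SemiStandard ![a, b]) (hne : a ≠ b)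
    (k' : Fin n) (hk' : a k' ≠ b k') (hmin : ∀ i : Fin n, i < k' → a i = b i)
    (j : Fin n) (hj : k' < j) (hjlt : a j < b j) :
    sigmaGT a (Function.update a j (b j)) ∧
    sigmaGE (Function.update a j (b j)) (Function.update b j (a j)) ∧
    suppEq ![Function.update a j (b j), Function.update b j (a j)] ![a, b] ∧
    SemiStandard ![Function.update a j (b j), Function.update b j (a j)] ∧
    tabGT ![a, b] ![Function.update a j (b j), Function.update b j (a j)] ∧
    ¬ IsStandard ![a, b] :=
  stmt4_general a b hss k' hk' hmin j hj hjlt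
end

section
/- Any tableau obtained from a standard p×n tableau by deleting the last (rightmost) column is standard. -/
/-!
Suppose the truncation `A'` of `A` were not standard: some semi-standard `B` with the columns
of `A'` is not `σ`-below it, so at the first row `k` where they differ, `A'_k >_σ B_k`. Append to
`B` a last column with the multiset of entries of the last column of `A`: keep the entries of
`A` in the rows above `k` and sort the remaining ones increasingly. The resulting `C` is
semi-standard, has the columns of `A`, agrees with `A` above row `k`, and `A_k >_σ C_k`, which
contradicts the minimality of `A`. The only delicate point is semi-standardness across row `k`:
`B_i = B_j` with `i < k ≤ j` would force `B_k = B_i = A'_i ≥_σ A'_k >_σ B_k`.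
-/

open Finset

theorem Fin.toLex_lt_toLex_iff_init {α : Type*} [LT α] {n : ℕ} {u v : Fin (n + 1) → α} :
    toLex u < toLex v ↔ toLex (Fin.init u) < toLex (Fin.init v) ∨
      Fin.init u = Fin.init v ∧ u (Fin.last n) < v (Fin.last n) := by
  change Pi.Lex _ _ u v ↔ Pi.Lex _ _ (Fin.init u) (Fin.init v) ∨ _
  simp [Pi.Lex, Fin.exists_fin_succ', Fin.forall_fin_succ', funext_iff, Fin.init,
    (Fin.castSucc_lt_last _).not_gt]

theorem Equiv.Perm.exists_monotoneOn_comp {ι α : Type*} [LinearOrder ι] [LinearOrder α]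
    (g : ι → α) (s : Finset ι) :
    ∃ τ : Equiv.Perm ι, (∀ i ∉ s, τ i = i) ∧ MonotoneOn (g ∘ τ) s := by
  let e := s.orderIsoOfFin rfl
  let σ := Tuple.sort fun m => g (e m)
  let τ : Equiv.Perm s := e.symm.toEquiv.trans (σ.trans e.toEquiv)
  refine ⟨Equiv.Perm.ofSubtype τ, fun i hi => Equiv.Perm.ofSubtype_apply_of_not_mem τ hi, ?_⟩
  intro i hi j hj hij
  simp only [Function.comp_apply, Equiv.Perm.ofSubtype_apply_of_mem τ hi,
    Equiv.Perm.ofSubtype_apply_of_mem τ hj]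
  exact Tuple.monotone_sort (fun m => g (e m))
    (e.symm.monotone (show (⟨i, hi⟩ : s) ≤ ⟨j, hj⟩ from hij))

section Tableau

variable {p n : ℕ}

theorem sigmaGE_iff_toLex_le {a b : Fin n → ℕ+} : sigmaGE a b ↔ toLex a ≤ toLex b := by
  rw [le_iff_eq_or_lt, toLex_inj]; rfl

theorem semiStandard_iff_monotone {A : Fin p → Fin n → ℕ+} :
    SemiStandard A ↔ Monotone fun i => toLex (A i) := by
  simp only [SemiStandard, sigmaGE_iff_toLex_le, Monotone]

def toLexTab (A : Fin p → Fin n → ℕ+) : Lex (Fin p → Lex (Fin n → ℕ+)) :=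
  toLex fun i => toLex (A i)

theorem tabGT_iff_toLexTab_lt {A B : Fin p → Fin n → ℕ+} :
    tabGT A B ↔ toLexTab A < toLexTab B := Iff.rfl

theorem toLexTab_injective : Function.Injective (toLexTab (p := p) (n := n)) := fun _ _ h => h

theorem semiStandard_init {A : Fin p → Fin (n + 1) → ℕ+} (hA : SemiStandard A) :
    SemiStandard fun i => Fin.init (A i) := by
  rw [semiStandard_iff_monotone] at hA ⊢
  intro i j hij
  contrapose! hA
  exact fun hmono => (hmono hij).not_gt (Fin.toLex_lt_toLex_iff_init.2 (Or.inl hA))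

theorem semiStandard_snoc {B : Fin p → Fin n → ℕ+} {e : Fin p → ℕ+} (hB : SemiStandard B)
    (he : ∀ i j, i ≤ j → B i = B j → e i ≤ e j) :
    SemiStandard fun i => (Fin.snoc (B i) (e i) : Fin (n + 1) → ℕ+) := by
  rw [semiStandard_iff_monotone] at hB ⊢
  intro i j hij
  rcases (hB hij).lt_or_eq with hlt | heq
  · exact (Fin.toLex_lt_toLex_iff_init.2 (Or.inl (by simpa only [Fin.init_snoc]))).le
  · have hBij : B i = B j := toLex_inj.1 heq
    rcases (he i j hij hBij).lt_or_eq with hlt | heq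
    · exact (Fin.toLex_lt_toLex_iff_init.2
      (Or.inr (by simpa only [Fin.init_snoc, Fin.snoc_last] using ⟨hBij, hlt⟩))).le
    · simp only [hBij, heq, le_refl]

theorem suppEq_snoc {A : Fin p → Fin (n + 1) → ℕ+} {B : Fin p → Fin n → ℕ+}
    {e : Fin p → ℕ+} (hB : suppEq B fun i => Fin.init (A i))
    (he : Multiset.map e univ.val = Multiset.map (fun i => A i (Fin.last n)) univ.val) :
    suppEq (fun i => (Fin.snoc (B i) (e i) : Fin (n + 1) → ℕ+)) A := by
  intro j
  induction j using Fin.lastCases with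
  | last => simpa only [Fin.snoc_last] using he
  | cast j => simpa only [Fin.snoc_castSucc, Fin.init] using hB j

theorem exists_semiStandard_suppEq_gt_of_init_lt {A : Fin p → Fin (n + 1) → ℕ+}
    {B : Fin p → Fin n → ℕ+} (hA : SemiStandard A) (hB : SemiStandard B)
    (hBA : suppEq B fun i => Fin.init (A i))
    (hlt : toLexTab (fun i => Fin.init (A i)) < toLexTab B) :
    ∃ C, SemiStandard C ∧ suppEq C A ∧ toLexTab A < toLexTab C := by
  obtain ⟨k, hpre, hk⟩ := hlt
  replace hpre : ∀ i < k, Fin.init (A i) = B i := hpre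
  replace hk : toLex (Fin.init (A k)) < toLex (B k) := hk
  -- The new last column keeps the entries of `A` above row `k` and sorts the rest.
  obtain ⟨τ, hτ, hmono⟩ :=
    Equiv.Perm.exists_monotoneOn_comp (fun i => A i (Fin.last n)) (Finset.Ici k)
  set e : Fin p → ℕ+ := fun i => A (τ i) (Fin.last n)
  have he_lt : ∀ i < k, e i = A i (Fin.last n) := fun i hi => by
    simp only [e, hτ i (by simpa using hi)]
  have hA_lt : ∀ i < k, A i = Fin.snoc (B i) (e i) := fun i hi => by
    rw [← hpre i hi, he_lt i hi, Fin.snoc_init_self]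
  have hties : ∀ i j, i ≤ j → B i = B j → e i ≤ e j := by
    intro i j hij hBij
    rcases lt_or_ge i k with hik | hki
    · rcases lt_or_ge j k with hjk | hkj
      · rw [he_lt i hik, he_lt j hjk]
        have hinit : Fin.init (A i) = Fin.init (A j) := by rw [hpre i hik, hpre j hjk, hBij]
        by_contra! hlast
        exact (semiStandard_iff_monotone.1 hA hij).not_gt
          (Fin.toLex_lt_toLex_iff_init.2 (Or.inr ⟨hinit.symm, hlast⟩))
      · -- `B i ≤ B k ≤ B j = B i` forces `B k = B i = init (A i) ≤ init (A k) < B k`.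
        have hB' := semiStandard_iff_monotone.1 hB
        have hBk : toLex (B k) = toLex (B i) :=
          le_antisymm (hBij ▸ hB' hkj) (hB' hik.le)
        have hAik := semiStandard_iff_monotone.1 (semiStandard_init hA) hik.le
        exact absurd (hk.trans_le (hBk.trans_le (hpre i hik ▸ hAik))) (lt_irrefl _)
    · exact hmono (by simpa using hki) (by simpa using hki.trans hij) hij
  refine ⟨fun i => Fin.snoc (B i) (e i), semiStandard_snoc hB hties,
    suppEq_snoc hBA ?_, k, fun i hi => hA_lt i hi, ?_⟩
  · rw [show e = (fun i => A i (Fin.last n)) ∘ τ from rfl, ← Multiset.map_map,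
      Multiset.map_univ_val_equiv]
  · change toLex (A k) < toLex (Fin.snoc (B k) (e k) : Fin (n + 1) → ℕ+)
    exact Fin.toLex_lt_toLex_iff_init.2 (Or.inl (by rwa [Fin.init_snoc]))

end Tableau

theorem stmt8 {p n : ℕ} (A : Fin p → Fin (n + 1) → ℕ+) (hA : IsStandard A) :
    IsStandard (fun i (j : Fin n) => A i j.castSucc) := by
  refine ⟨semiStandard_init hA.1, fun B hB hBA hne => ?_⟩
  rw [tabGT_iff_toLexTab_lt]
  refine (lt_or_gt_of_ne (toLexTab_injective.ne hne)).resolve_right fun hlt => ?_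
  obtain ⟨C, hC, hCA, hAC⟩ := exists_semiStandard_suppEq_gt_of_init_lt hA.1 hB hBA hlt
  have hCne : C ≠ A := fun h => hAC.ne' (congrArg toLexTab h)
  exact lt_asymm hAC (tabGT_iff_toLexTab_lt.1 (hA.2 C hC hCA hCne))
end

section
/- Let [a; b] be a 2×n semi-standard tableau over ℤ₊ⁿ with a ≠ b, with k the first index where a_k < b_k, such that a_j ≥ b_j for all j > k. Then for any semi-standard tableau [p; q] with the same column supports, p ≥_σ a and ([p;q] = [a;b] or [p;q] >_σ [a;b]). -/
open Finset

/-! Let `m` be the first column where the top row `p` of `[p; q]` differs from `a`. There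
`p m = b m ≠ a m`, so `m ≥ k`. If `m = k`, then `q` agrees with `p` before `k` and
`q k = a k < b k = p k`, so `q >_σ p`, contradicting semi-standardness. If `m > k`, then
`p m = b m < a m`, so `p >_σ a`. -/

theorem Multiset.pair_eq_pair_iff {α : Type*} {x y z w : α} :
    ({x, y} : Multiset α) = {z, w} ↔ (x = z ∧ y = w) ∨ (x = w ∧ y = z) := by
  refine ⟨fun h => ?_, ?_⟩
  · simp only [Multiset.insert_eq_cons, Multiset.cons_eq_cons] at h
    rcases h with ⟨hxz, hyw⟩ | ⟨-, cs, hy, hz⟩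
    · exact Or.inl ⟨hxz, Multiset.singleton_inj.mp hyw⟩
    · rw [Multiset.singleton_eq_cons_iff] at hy hz
      exact Or.inr ⟨hz.1.symm, hy.1⟩
  · rintro (⟨rfl, rfl⟩ | ⟨rfl, rfl⟩)
    · rfl
    · exact Multiset.pair_comm _ _

theorem Function.exists_first_ne {α : Type*} {n : ℕ} {a b : Fin n → α} (h : a ≠ b) :
    ∃ m, (∀ i < m, a i = b i) ∧ a m ≠ b m := by
  obtain ⟨m, hm, hfirst⟩ := wellFounded_lt.has_min {i | a i ≠ b i} (Function.ne_iff.mp h)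
  exact ⟨m, fun i hi => by_contra fun hne => hfirst i hne hi, hm⟩

section TwoRows

variable {n : ℕ} {a b p q : Fin n → ℕ+}

theorem sigmaGT.asymm (h : sigmaGT a b) : ¬ sigmaGT b a := by
  rintro ⟨l, hl, hba⟩
  obtain ⟨k, hk, hab⟩ := h
  rcases lt_trichotomy k l with hkl | rfl | hlk
  · exact hab.ne (hl k hkl).symm
  · exact hab.not_gt hba
  · exact hba.ne (hk l hlk).symm

theorem SemiStandard.sigmaGE_two_rows (h : SemiStandard ![p, q]) : sigmaGE p q :=
  h 0 1 zero_le_one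

theorem suppEq.column_cases (h : suppEq ![p, q] ![a, b]) (j : Fin n) :
    (p j = a j ∧ q j = b j) ∨ (p j = b j ∧ q j = a j) := by
  have hcol := h j
  simp only [Fin.univ_val_map, List.ofFn_succ, List.ofFn_zero, Matrix.cons_val_zero] at hcol
  exact Multiset.pair_eq_pair_iff.mp hcol

theorem tabGT_two_rows_of_sigmaGT (h : sigmaGT p a) : tabGT ![p, q] ![a, b] :=
  ⟨0, fun i hi => absurd hi (Fin.not_lt_zero i), h⟩

theorem sigmaGE_top_of_column_swap (k : Fin n) (hmin : ∀ i < k, a i = b i) (hk : a k < b k)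
    (hge : ∀ j, k < j → b j ≤ a j)
    (hcol : ∀ j, (p j = a j ∧ q j = b j) ∨ (p j = b j ∧ q j = a j)) (hpq : sigmaGE p q) :
    sigmaGE p a := by
  by_cases hpa : p = a
  · exact Or.inl hpa
  obtain ⟨m, hbelow, hpm⟩ := Function.exists_first_ne hpa
  obtain ⟨hpbm, hqam⟩ : p m = b m ∧ q m = a m := (hcol m).resolve_left fun h => hpm h.1
  have habm : a m ≠ b m := fun h => hpm (hpbm.trans h.symm)
  rcases lt_trichotomy m k with hmk | rfl | hkm
  · exact absurd (hmin m hmk) habm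
  · have hqp : sigmaGT q p := by
      refine ⟨m, fun i hi => ?_, by rwa [hpbm, hqam]⟩
      rcases hcol i with ⟨hp, hq⟩ | ⟨hp, hq⟩ <;> simp only [hp, hq, hmin i hi]
    rcases hpq with rfl | hpq
    · exact (hqp.asymm hqp).elim
    · exact (hqp.asymm hpq).elim
  · exact Or.inr ⟨m, hbelow, lt_of_le_of_ne (hpbm ▸ hge m hkm) hpm⟩

end TwoRows

theorem stmt18_general {n : ℕ} (a b : Fin n → ℕ+)
    (k : Fin n) (hmin : ∀ i : Fin n, i < k → a i = b i) (hk : a k < b k)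
    (hge : ∀ j : Fin n, k < j → b j ≤ a j) :
    ∀ pp qq : Fin n → ℕ+, SemiStandard ![pp, qq] → suppEq ![pp, qq] ![a, b] →
      sigmaGE pp a ∧ (![pp, qq] = ![a, b] ∨ tabGT ![pp, qq] ![a, b]) := by
  intro pp qq hss hsupp
  have hcol := hsupp.column_cases
  have htop : sigmaGE pp a := sigmaGE_top_of_column_swap k hmin hk hge hcol hss.sigmaGE_two_rows
  refine ⟨htop, htop.imp (fun hpa => ?_) tabGT_two_rows_of_sigmaGT⟩
  subst hpa
  have hqb : qq = b := funext fun j => by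
    rcases hcol j with ⟨-, hq⟩ | ⟨hp, hq⟩
    · exact hq
    · exact hq.trans hp
  rw [hqb]

theorem stmt18 {n : ℕ} (a b : Fin n → ℕ+) (hss : SemiStandard ![a, b]) (hne : a ≠ b)
    (k : Fin n) (hmin : ∀ i : Fin n, i < k → a i = b i) (hk : a k < b k)
    (hge : ∀ j : Fin n, k < j → b j ≤ a j) :
    ∀ pp qq : Fin n → ℕ+, SemiStandard ![pp, qq] → suppEq ![pp, qq] ![a, b] →
      sigmaGE pp a ∧ (![pp, qq] = ![a, b] ∨ tabGT ![pp, qq] ![a, b]) :=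
  stmt18_general a b k hmin hk hge
end
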